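/- Let P be a real univariate polynomial of degree at most p that is nonnegative on [0, ∞). Then P can be written as a finite sum of polynomials of the form x ↦ ∑_{l=0}^{p} x^l · ∑_{i+j=2l, 0≤i,j≤p} y_i y_j: that is, there exist N ∈ ℕ and vectors y^{(1)}, …, y^{(N)} ∈ ℝ^{p+1} (indexed by 0,…,p) such that for all x ≥ 0, P(x) = ∑_{t=1}^{N} ∑_{l=0}^{p} x^l · ∑_{i+j=2l, 0≤i,j≤p} y^{(t)}_i y^{(t)}_j. -/

import Mathlib

/-!
For `x = t²` the polynomial `P(t²)` is nonnegative on all of `ℝ`, hence a sum of two squares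
`A² + B²`; since leading coefficients of squares cannot cancel, `deg A, deg B ≤ p`.
Two squares suffice by induction on the degree: a nonnegative real polynomial is divisible by a
quadratic `(X - a)² + b²` (from a non-real root, or from a real root, which is a minimum and hence
double), the quotient is again nonnegative, and sums of two squares are closed under products.
Comparing the coefficient of `t^{2l}` on both sides gives the decomposition with `N = 2`, the
vectors `y` being the coefficient vectors of `A` and `B`.
-/

open Polynomial

namespace Polynomial

theorem natDegree_sq_add_sq {R : Type*} [CommRing R] [LinearOrder R] [IsStrictOrderedRing R]
    (A B : R[X]) :
    (A ^ 2 + B ^ 2).natDegree = max (A ^ 2).natDegree (B ^ 2).natDegree := by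
  rcases lt_trichotomy (A ^ 2).natDegree (B ^ 2).natDegree with h | h | h
  · rw [natDegree_add_eq_right_of_natDegree_lt h, max_eq_right h.le]
  · rcases eq_or_ne A 0 with rfl | hA
    · simp
    rw [← h, max_self]
    refine le_antisymm (natDegree_add_le_of_degree_le le_rfl h.ge) (le_natDegree_of_ne_zero ?_)
    rw [coeff_add, coeff_natDegree, h, coeff_natDegree, leadingCoeff_pow, leadingCoeff_pow]
    have := leadingCoeff_ne_zero.mpr hA
    positivity
  · rw [natDegree_add_eq_left_of_natDegree_lt h, max_eq_left h.le]

theorem coeff_sq_eq_sum_fin {R : Type*} [CommSemiring R] {A : R[X]} {p : ℕ}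
    (hA : A.natDegree ≤ p) (n : ℕ) :
    (A ^ 2).coeff n = ∑ i : Fin (p + 1), ∑ j : Fin (p + 1),
      if i.val + j.val = n then A.coeff i * A.coeff j else 0 := by
  conv_lhs => rw [as_sum_range' A (p + 1) (Nat.lt_succ_of_le hA)]
  simp only [sq, Finset.sum_mul_sum, finsetSum_coeff, monomial_mul_monomial, coeff_monomial,
    ← Fin.sum_univ_eq_sum_range (n := p + 1)]

theorem sq_X_sub_C_dvd_of_isRoot_of_eval_nonneg {Q : ℝ[X]} {a : ℝ} (ha : Q.IsRoot a)
    (hQ : ∀ t, 0 ≤ Q.eval t) : (X - C a) ^ 2 ∣ Q := by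
  rcases eq_or_ne Q 0 with rfl | hQ0
  · exact dvd_zero _
  have hmin : IsLocalMin (fun t => Q.eval t) a :=
    Filter.Eventually.of_forall fun t => by simpa [ha.eq_zero] using hQ t
  have hderiv : Q.derivative.eval a = 0 := by
    simpa only [Polynomial.deriv] using hmin.deriv_eq_zero
  exact (le_rootMultiplicity_iff hQ0).mp ((one_lt_rootMultiplicity_iff_isRoot hQ0).mpr ⟨ha, hderiv⟩)

theorem exists_sq_add_sq_dvd_of_eval_nonneg {Q : ℝ[X]} (hQ : ∀ t, 0 ≤ Q.eval t)
    (hdeg : 0 < Q.natDegree) : ∃ a b : ℝ, (X - C a) ^ 2 + C b ^ 2 ∣ Q := by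
  obtain ⟨z, hz⟩ := IsAlgClosed.exists_aeval_eq_zero ℂ Q (natDegree_pos_iff_degree_pos.mp hdeg).ne'
  refine ⟨z.re, z.im, ?_⟩
  rcases eq_or_ne z.im 0 with him | him
  · have hre : Q.IsRoot z.re := by
      rwa [← Complex.re_add_im z, him, Complex.ofReal_zero, zero_mul, add_zero,
        ← Complex.coe_algebraMap, aeval_algebraMap_apply_eq_algebraMap_eval,
        Complex.coe_algebraMap, Complex.ofReal_eq_zero] at hz
    simpa [him] using sq_X_sub_C_dvd_of_isRoot_of_eval_nonneg hre hQ
  · convert Q.quadratic_dvd_of_aeval_eq_zero_im_ne_zero hz him using 1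
    rw [← Complex.normSq_eq_norm_sq, Complex.normSq_apply]
    simp only [map_add, map_mul, map_ofNat]
    ring

theorem eval_nonneg_of_eval_mul_nonneg {q S : ℝ[X]} (hq0 : q ≠ 0) (hq : ∀ t, 0 ≤ q.eval t)
    (hqS : ∀ t, 0 ≤ (q * S).eval t) (t : ℝ) : 0 ≤ S.eval t := by
  have hdense : Dense {t : ℝ | q.IsRoot t}ᶜ :=
    (finite_setOfPred_isRoot hq0).countable.dense_compl ℝ
  have hclosed : IsClosed {t : ℝ | 0 ≤ S.eval t} := isClosed_le continuous_const S.continuous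
  refine closure_minimal (fun t ht => ?_) hclosed (hdense.closure_eq.symm ▸ Set.mem_univ t)
  have hqt : 0 < q.eval t := (hq t).lt_of_ne' ht
  exact nonneg_of_mul_nonneg_right (eval_mul (p := q) ▸ hqS t) hqt

theorem exists_eq_sq_add_sq_of_eval_nonneg {Q : ℝ[X]} (hQ : ∀ t, 0 ≤ Q.eval t) :
    ∃ A B : ℝ[X], Q = A ^ 2 + B ^ 2 := by
  induction hn : Q.natDegree using Nat.strong_induction_on generalizing Q with
  | _ n ih =>
    rcases Nat.eq_zero_or_pos n with rfl | hpos
    · rw [eq_C_of_natDegree_eq_zero hn]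
      refine ⟨C √(Q.coeff 0), 0, ?_⟩
      rw [← C_pow, Real.sq_sqrt (by simpa [coeff_zero_eq_eval_zero] using hQ 0)]
      simp
    obtain ⟨a, b, S, rfl⟩ := exists_sq_add_sq_dvd_of_eval_nonneg hQ (hn ▸ hpos)
    set q : ℝ[X] := (X - C a) ^ 2 + C b ^ 2
    have hq : ∀ t, 0 ≤ q.eval t := fun t => by
      simp only [q, eval_add, eval_pow, eval_sub, eval_X, eval_C]
      positivity
    have hqdeg : q.natDegree = 2 := by simp only [q]; compute_degree!
    have hq0 : q ≠ 0 := ne_zero_of_natDegree_gt (n := 0) (by omega)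
    have hS0 : S ≠ 0 := by rintro rfl; simp only [mul_zero, natDegree_zero] at hn; omega
    have hSdeg : S.natDegree < n := by rw [← hn, natDegree_mul hq0 hS0]; omega
    obtain ⟨A, B, hAB⟩ := ih _ hSdeg (eval_nonneg_of_eval_mul_nonneg hq0 hq hQ) rfl
    exact ⟨_, _, by rw [hAB, sq_add_sq_mul_sq_add_sq]⟩

theorem exists_expand_two_eq_sq_add_sq {P : ℝ[X]} (hP : ∀ x, 0 ≤ x → 0 ≤ P.eval x) :
    ∃ A B : ℝ[X], expand ℝ 2 P = A ^ 2 + B ^ 2 ∧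
      A.natDegree ≤ P.natDegree ∧ B.natDegree ≤ P.natDegree := by
  obtain ⟨A, B, hAB⟩ := exists_eq_sq_add_sq_of_eval_nonneg (Q := expand ℝ 2 P)
    fun t => by simpa only [expand_eval] using hP _ (sq_nonneg t)
  have hdeg := natDegree_sq_add_sq A B
  rw [← hAB, natDegree_expand, natDegree_pow, natDegree_pow] at hdeg
  exact ⟨A, B, hAB, by omega, by omega⟩

end Polynomial

/-- a real univariate polynomial of degree at most `p` that is nonnegative on
`[0, ∞)` is a finite sum of polynomials of the form
`x ↦ ∑_{l=0}^{p} x^l ∑_{i+j=2l, 0≤i,j≤p} y_i y_j`. -/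
theorem nonneg_poly_on_halfline_decomposition (p : ℕ) (P : Polynomial ℝ)
    (hdeg : P.natDegree ≤ p) (hpos : ∀ x : ℝ, 0 ≤ x → 0 ≤ P.eval x) :
    ∃ (N : ℕ) (y : Fin N → Fin (p + 1) → ℝ),
      ∀ x : ℝ, 0 ≤ x →
        P.eval x = ∑ t : Fin N, ∑ l ∈ Finset.range (p + 1), x ^ l *
          ∑ i : Fin (p + 1), ∑ j : Fin (p + 1),
            if i.val + j.val = 2 * l then y t i * y t j else 0 := by
  obtain ⟨A, B, hAB, hA, hB⟩ := exists_expand_two_eq_sq_add_sq hpos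
  refine ⟨2, ![fun i => A.coeff i, fun i => B.coeff i], fun x _ => ?_⟩
  rw [Fin.sum_univ_two, eval_eq_sum_range' (Nat.lt_succ_of_le hdeg), ← Finset.sum_add_distrib]
  refine Finset.sum_congr rfl fun l _ => ?_
  have hcoeff : P.coeff l = (A ^ 2).coeff (2 * l) + (B ^ 2).coeff (2 * l) := by
    rw [← coeff_add, ← hAB, mul_comm, coeff_expand_mul two_pos]
  simp only [Matrix.cons_val_zero, Matrix.cons_val_one, hcoeff,
    coeff_sq_eq_sum_fin (hA.trans hdeg), coeff_sq_eq_sum_fin (hB.trans hdeg)]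
  ring
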